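/- Let k ≥ 0 and let K ⊆ ℝ³ be a nonempty bounded open set. Suppose w ∈ P_k³ satisfies: (i) ∫_K w·(curl r) dx = 0 for all r ∈ P_k³; (ii) ∫_K w·r dx = 0 for every r ∈ P_k³ such that ∫_K r·(curl v) dx = 0 for all v ∈ P_{k+1}³; and (iii) ∫_K w·(curl v) dx = 0 for every v ∈ P_{k+1}³ such that ∫_K v·z dx = 0 for all z ∈ P_k³ + grad(𝒫̃_{k+2}). Then w = 0. -/

import Mathlib

open MvPolynomial MeasureTheory

/-- The `i`-th partial derivative as a linear map on polynomials in three variables. -/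
noncomputable def pd (i : Fin 3) : MvPolynomial (Fin 3) ℝ →ₗ[ℝ] MvPolynomial (Fin 3) ℝ :=
  (pderiv i).toLinearMap

/-- The gradient of a polynomial, `grad p = (∂₁p, ∂₂p, ∂₃p)`, as a linear map. -/
noncomputable def gradLM : MvPolynomial (Fin 3) ℝ →ₗ[ℝ] (Fin 3 → MvPolynomial (Fin 3) ℝ) :=
  LinearMap.pi fun i => pd i

/-- The curl of a polynomial vector field,
`curl F = (∂₂F₃ − ∂₃F₂, ∂₃F₁ − ∂₁F₃, ∂₁F₂ − ∂₂F₁)`, as a linear map. -/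
noncomputable def curlLM : (Fin 3 → MvPolynomial (Fin 3) ℝ) →ₗ[ℝ] (Fin 3 → MvPolynomial (Fin 3) ℝ) :=
  LinearMap.pi
    ![pd 1 ∘ₗ LinearMap.proj 2 - pd 2 ∘ₗ LinearMap.proj 1,
      pd 2 ∘ₗ LinearMap.proj 0 - pd 0 ∘ₗ LinearMap.proj 2,
      pd 0 ∘ₗ LinearMap.proj 1 - pd 1 ∘ₗ LinearMap.proj 0]

/-- `P_k³`: vector fields whose three components are polynomials of total degree ≤ k. -/
noncomputable def Pvec (k : ℕ) : Submodule ℝ (Fin 3 → MvPolynomial (Fin 3) ℝ) :=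
  Submodule.pi Set.univ fun _ => restrictTotalDegree (Fin 3) ℝ k

/-- The `L²(K)` inner product `(F,G)_K = ∫_K F·G dx` of two polynomial vector fields. -/
noncomputable def ipK (K : Set (Fin 3 → ℝ)) (F G : Fin 3 → MvPolynomial (Fin 3) ℝ) : ℝ :=
  ∫ x in K, ∑ i : Fin 3, eval x (F i) * eval x (G i)

/-! ### Auxiliary lemmas -/

lemma pd_comm (i j : Fin 3) (p : MvPolynomial (Fin 3) ℝ) :
    pderiv i (pderiv j p) = pderiv j (pderiv i p) := by
  induction p using MvPolynomial.induction_on with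
  | C a => simp
  | add p q hp hq => simp [hp, hq]
  | mul_X p n hp =>
    have h2X : ∀ a b : Fin 3, pderiv a (pderiv b (X n : MvPolynomial (Fin 3) ℝ)) = 0 := by
      intro a b
      rcases eq_or_ne n b with rfl | h
      · simp
      · simp [pderiv_X_of_ne h]
    have h1X : ∀ a b : Fin 3, pderiv a ((Pi.single b 1 : Fin 3 → MvPolynomial (Fin 3) ℝ) n) = 0 := by
      intro a b
      rcases eq_or_ne n b with rfl | h
      · simp
      · rw [Pi.single_eq_of_ne h]; simp
    simp [pderiv_mul, hp, h2X, h1X]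
    ring

lemma td_pderiv (i : Fin 3) (p : MvPolynomial (Fin 3) ℝ) {n : ℕ} (h : p.totalDegree ≤ n + 1) :
    (pderiv i p).totalDegree ≤ n := by
  classical
  conv_lhs => rw [p.as_sum]
  rw [map_sum]
  refine totalDegree_finsetSum_le fun m hm => ?_
  rw [pderiv_monomial]
  rcases eq_or_ne (m i) 0 with h0 | h0
  · simp [h0]
  · have hc : coeff m p * (m i : ℝ) ≠ 0 :=
      mul_ne_zero (mem_support_iff.mp hm) (Nat.cast_ne_zero.mpr h0)
    rw [totalDegree_monomial _ hc]
    have hle : (Finsupp.single i 1 : Fin 3 →₀ ℕ) ≤ m := by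
      intro j
      rcases eq_or_ne j i with rfl | hj
      · simpa [Finsupp.single_apply] using Nat.one_le_iff_ne_zero.mpr h0
      · simp [Finsupp.single_apply, hj.symm]
    have hsum : ((m - Finsupp.single i 1).sum fun _ e => e)
        = (m.sum fun _ e => e) - 1 := by
      rw [Finsupp.sum_fintype _ _ (fun _ => rfl), Finsupp.sum_fintype _ _ (fun _ => rfl)]
      rw [Finset.sum_congr rfl fun j _ => Finsupp.tsub_apply m (Finsupp.single i 1) j,
        Finset.sum_tsub_distrib _ fun j _ => hle j]
      congr 1
      simp [Finsupp.single_apply, Finset.sum_ite_eq']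
    refine hsum.le.trans ?_
    have hms : (m.sum fun _ e => e) ≤ n + 1 := (le_totalDegree hm).trans h
    omega

lemma mvp_analytic (p : MvPolynomial (Fin 3) ℝ) :
    AnalyticOnNhd ℝ (fun x : Fin 3 → ℝ => eval x p) Set.univ := by
  induction p using MvPolynomial.induction_on with
  | C a => simpa using (analyticOnNhd_const : AnalyticOnNhd ℝ (fun _ : Fin 3 → ℝ => a) Set.univ)
  | add p q hp hq => simpa [map_add, Pi.add_def] using hp.add hq
  | mul_X p n hp =>
    have hX : AnalyticOnNhd ℝ (fun x : Fin 3 → ℝ => x n) Set.univ :=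
      (ContinuousLinearMap.proj n : (Fin 3 → ℝ) →L[ℝ] ℝ).analyticOnNhd Set.univ
    simpa [map_mul] using hp.mul hX

lemma poly_zero_of_vanish {K : Set (Fin 3 → ℝ)} (hKo : IsOpen K) (hKne : K.Nonempty)
    {p : MvPolynomial (Fin 3) ℝ} (h : ∀ x ∈ K, eval x p = 0) : p = 0 := by
  obtain ⟨x₀, hx₀⟩ := hKne
  have hev : (fun x : Fin 3 → ℝ => eval x p) =ᶠ[nhds x₀] 0 := by
    filter_upwards [hKo.mem_nhds hx₀] with x hx using h x hx
  have := (mvp_analytic p).eqOn_zero_of_preconnected_of_eventuallyEq_zero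
    isPreconnected_univ (Set.mem_univ x₀) hev
  refine MvPolynomial.funext fun x => ?_
  simpa using this (Set.mem_univ x)

lemma integrableOn_dot {K : Set (Fin 3 → ℝ)} (hKb : Bornology.IsBounded K)
    (F G : Fin 3 → MvPolynomial (Fin 3) ℝ) :
    IntegrableOn (fun x => ∑ i : Fin 3, eval x (F i) * eval x (G i)) K volume := by
  have hcont : Continuous fun x : Fin 3 → ℝ => ∑ i : Fin 3, eval x (F i) * eval x (G i) :=
    continuous_finset_sum _ fun i _ =>
      (MvPolynomial.continuous_eval (F i)).mul (MvPolynomial.continuous_eval (G i))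
  exact (hcont.continuousOn.integrableOn_compact hKb.isCompact_closure).mono_set
    subset_closure

lemma ipK_comm (K : Set (Fin 3 → ℝ)) (F G : Fin 3 → MvPolynomial (Fin 3) ℝ) :
    ipK K F G = ipK K G F := by
  unfold ipK
  congr 1
  funext x
  exact Finset.sum_congr rfl fun i _ => mul_comm _ _

lemma ipK_add_left {K : Set (Fin 3 → ℝ)} (hKb : Bornology.IsBounded K)
    (F G H : Fin 3 → MvPolynomial (Fin 3) ℝ) :
    ipK K (F + G) H = ipK K F H + ipK K G H := by
  unfold ipK
  rw [← integral_add (integrableOn_dot hKb F H) (integrableOn_dot hKb G H)]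
  congr 1
  funext x
  rw [← Finset.sum_add_distrib]
  exact Finset.sum_congr rfl fun i _ => by simp [add_mul]

lemma ipK_smul_left (K : Set (Fin 3 → ℝ)) (c : ℝ) (F G : Fin 3 → MvPolynomial (Fin 3) ℝ) :
    ipK K (c • F) G = c * ipK K F G := by
  unfold ipK
  rw [← MeasureTheory.integral_const_mul]
  congr 1
  funext x
  rw [Finset.mul_sum]
  refine Finset.sum_congr rfl fun i _ => ?_
  simp [MvPolynomial.smul_eval, mul_assoc]

lemma ipK_add_right {K : Set (Fin 3 → ℝ)} (hKb : Bornology.IsBounded K)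
    (F G H : Fin 3 → MvPolynomial (Fin 3) ℝ) :
    ipK K F (G + H) = ipK K F G + ipK K F H := by
  rw [ipK_comm, ipK_add_left hKb, ipK_comm K G F, ipK_comm K H F]

lemma ipK_self_nonneg {K : Set (Fin 3 → ℝ)} (hKo : IsOpen K)
    (F : Fin 3 → MvPolynomial (Fin 3) ℝ) : 0 ≤ ipK K F F := by
  refine setIntegral_nonneg hKo.measurableSet fun x _ => ?_
  exact Finset.sum_nonneg fun i _ => mul_self_nonneg _

lemma ipK_definite {K : Set (Fin 3 → ℝ)} (hKo : IsOpen K) (hKne : K.Nonempty)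
    (hKb : Bornology.IsBounded K) {F : Fin 3 → MvPolynomial (Fin 3) ℝ}
    (h : ipK K F F = 0) : F = 0 := by
  set f : (Fin 3 → ℝ) → ℝ := fun x => ∑ i : Fin 3, eval x (F i) * eval x (F i) with hf
  have hcont : Continuous f :=
    continuous_finset_sum _ fun i _ =>
      (MvPolynomial.continuous_eval (F i)).mul (MvPolynomial.continuous_eval (F i))
  have hae : f =ᵐ[volume.restrict K] 0 := by
    refine (integral_eq_zero_iff_of_nonneg_ae ?_ (integrableOn_dot hKb F F)).mp h
    refine Filter.Eventually.of_forall fun x => ?_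
    exact Finset.sum_nonneg fun i _ => mul_self_nonneg _
  have hKzero : ∀ x ∈ K, f x = 0 := by
    by_contra hcon
    push_neg at hcon
    obtain ⟨x₀, hx₀K, hx₀⟩ := hcon
    have hpos : 0 < f x₀ :=
      lt_of_le_of_ne (Finset.sum_nonneg fun i _ => mul_self_nonneg _) (Ne.symm hx₀)
    set U : Set (Fin 3 → ℝ) := K ∩ f ⁻¹' Set.Ioi 0 with hU
    have hUo : IsOpen U := hKo.inter (isOpen_Ioi.preimage hcont)
    have hUne : U.Nonempty := ⟨x₀, hx₀K, hpos⟩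
    have hUpos : 0 < volume U := hUo.measure_pos volume hUne
    have hnull : volume {x | x ∈ K ∧ ¬ f x = 0} = 0 := by
      have := (ae_restrict_iff' hKo.measurableSet).mp hae
      simpa [ae_iff] using this
    have hsub : U ⊆ {x | x ∈ K ∧ ¬ f x = 0} := by
      intro x hx
      exact ⟨hx.1, ne_of_gt hx.2⟩
    exact absurd (measure_mono_null hsub hnull) hUpos.ne'
  funext i
  refine poly_zero_of_vanish hKo hKne fun x hx => ?_
  have hx0 := hKzero x hx
  have hnn : ∀ j ∈ Finset.univ, 0 ≤ eval x (F j) * eval x (F j) := fun j _ => mul_self_nonneg _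
  have := (Finset.sum_eq_zero_iff_of_nonneg hnn).mp hx0 i (Finset.mem_univ i)
  exact mul_self_eq_zero.mp this

lemma mem_Pvec {k : ℕ} {F : Fin 3 → MvPolynomial (Fin 3) ℝ} :
    F ∈ Pvec k ↔ ∀ i, (F i).totalDegree ≤ k := by
  simp [Pvec, Submodule.mem_pi, mem_restrictTotalDegree]

lemma Pvec_mono {a b : ℕ} (h : a ≤ b) : Pvec a ≤ Pvec b := fun F hF =>
  mem_Pvec.mpr fun i => (mem_Pvec.mp hF i).trans h

lemma curl_apply (F : Fin 3 → MvPolynomial (Fin 3) ℝ) :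
    curlLM F = ![pd 1 (F 2) - pd 2 (F 1), pd 2 (F 0) - pd 0 (F 2), pd 0 (F 1) - pd 1 (F 0)] := by
  funext i
  fin_cases i <;> rfl

lemma td_sub_le {p q : MvPolynomial (Fin 3) ℝ} {n : ℕ} (hp : p.totalDegree ≤ n)
    (hq : q.totalDegree ≤ n) : (p - q).totalDegree ≤ n := by
  rw [sub_eq_add_neg]
  refine (totalDegree_add _ _).trans (max_le hp ?_)
  simpa [totalDegree_neg] using hq

lemma curl_mem {m : ℕ} {v : Fin 3 → MvPolynomial (Fin 3) ℝ} (hv : v ∈ Pvec (m + 1)) :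
    curlLM v ∈ Pvec m := by
  rw [mem_Pvec] at hv
  rw [curl_apply, mem_Pvec]
  intro i
  fin_cases i <;>
    exact td_sub_le (td_pderiv _ _ (hv _)) (td_pderiv _ _ (hv _))

lemma grad_mem {k : ℕ} {q : MvPolynomial (Fin 3) ℝ}
    (hq : q ∈ homogeneousSubmodule (Fin 3) ℝ (k + 2)) : gradLM q ∈ Pvec (k + 1) := by
  rw [mem_Pvec]
  intro i
  exact td_pderiv _ _ ((mem_homogeneousSubmodule _ _).mp hq).totalDegree_le

lemma curl_grad (q : MvPolynomial (Fin 3) ℝ) : curlLM (gradLM q) = 0 := by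
  rw [curl_apply]
  funext i
  fin_cases i <;>
  · show pderiv _ (pderiv _ q) - pderiv _ (pderiv _ q) = 0
    rw [pd_comm]
    exact sub_self _

/-- The canonical surjection witnessing finite-dimensionality of `Pvec k`. -/
noncomputable def pvecOfPi (k : ℕ) :
    (Fin 3 → restrictTotalDegree (Fin 3) ℝ k) →ₗ[ℝ] ↥(Pvec k) where
  toFun v := ⟨fun i => (v i : MvPolynomial (Fin 3) ℝ), fun i _ => (v i).2⟩
  map_add' u v := rfl
  map_smul' c v := rfl

instance pvecFinite (k : ℕ) : Module.Finite ℝ ↥(Pvec k) :=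
  Module.Finite.of_surjective (pvecOfPi k) fun F =>
    ⟨fun i => ⟨F.1 i, F.2 i (Set.mem_univ i)⟩, rfl⟩

/-- The `L²(K)` inner-product-space core structure on `Pvec k`. -/
noncomputable def ipCore (k : ℕ) (K : Set (Fin 3 → ℝ)) (hKo : IsOpen K) (hKne : K.Nonempty)
    (hKb : Bornology.IsBounded K) : InnerProductSpace.Core ℝ ↥(Pvec k) where
  inner F G := ipK K F.1 G.1
  conj_inner_symm F G := by simpa using ipK_comm K G.1 F.1
  re_inner_nonneg F := by simpa using ipK_self_nonneg hKo F.1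
  add_left x y z := ipK_add_left hKb x.1 y.1 z.1
  smul_left x y r := by simpa using ipK_smul_left K r x.1 y.1
  definite x h := Subtype.ext (ipK_definite hKo hKne hKb h)

/-- Uniqueness for the square system defining the curl+ projection: if `w ∈ P_k³` is
`L²(K)`-orthogonal to `curl(P_k³)`, to the orthogonal complement of `curl(P_{k+1}³)`
in `P_k³`, and to the curls of fields orthogonal to `P_k³ + grad(𝒫̃_{k+2})`,
then `w = 0`. -/
theorem stmt9 (k : ℕ) (K : Set (Fin 3 → ℝ)) (hKo : IsOpen K) (hKne : K.Nonempty)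
    (hKb : Bornology.IsBounded K)
    (w : Fin 3 → MvPolynomial (Fin 3) ℝ) (hw : w ∈ Pvec k)
    (h1 : ∀ r ∈ Pvec k, ipK K w (curlLM r) = 0)
    (h2 : ∀ r ∈ Pvec k, (∀ v ∈ Pvec (k + 1), ipK K r (curlLM v) = 0) → ipK K w r = 0)
    (h3 : ∀ v ∈ Pvec (k + 1),
      (∀ z ∈ Pvec k ⊔ Submodule.map gradLM (homogeneousSubmodule (Fin 3) ℝ (k + 2)),
        ipK K v z = 0) →
      ipK K w (curlLM v) = 0) :
    w = 0 := by
  classical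
  letI cI : InnerProductSpace.Core ℝ ↥(Pvec (k + 1)) := ipCore (k + 1) K hKo hKne hKb
  letI : NormedAddCommGroup ↥(Pvec (k + 1)) :=
    @InnerProductSpace.Core.toNormedAddCommGroup ℝ ↥(Pvec (k + 1)) _ _ _ cI
  letI : InnerProductSpace ℝ ↥(Pvec (k + 1)) := InnerProductSpace.ofCore cI.toCore
  have hinner : ∀ a b : ↥(Pvec (k + 1)), (inner ℝ a b : ℝ) = ipK K a.1 b.1 := fun a b => rfl
  have hPle : Pvec k ≤ Pvec (k + 1) := Pvec_mono (Nat.le_succ k)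
  have hsup_le : Pvec k ⊔ Submodule.map gradLM (homogeneousSubmodule (Fin 3) ℝ (k + 2))
      ≤ Pvec (k + 1) := by
    refine sup_le hPle ?_
    rintro _ ⟨q, hq, rfl⟩
    exact grad_mem hq
  let curlE : ↥(Pvec (k + 1)) →ₗ[ℝ] ↥(Pvec (k + 1)) :=
    LinearMap.codRestrict (Pvec (k + 1)) (curlLM ∘ₗ (Pvec (k + 1)).subtype)
      fun v => hPle (curl_mem v.2)
  set T : Submodule ℝ ↥(Pvec (k + 1)) := LinearMap.range curlE with hT
  set G' : Submodule ℝ ↥(Pvec (k + 1)) :=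
    (Pvec k ⊔ Submodule.map gradLM (homogeneousSubmodule (Fin 3) ℝ (k + 2))).comap
      (Pvec (k + 1)).subtype with hG
  set w' : ↥(Pvec (k + 1)) := ⟨w, hPle hw⟩ with hw'
  obtain ⟨y, hyT, z, hz, hwyz⟩ := T.exists_add_mem_mem_orthogonal w'
  obtain ⟨v, rfl⟩ := hyT
  set_option synthInstance.maxHeartbeats 400000 in
  obtain ⟨g, hgG, u, hu, hvgu⟩ := G'.exists_add_mem_mem_orthogonal v
  have hcurlE_coe : ∀ a : ↥(Pvec (k + 1)),
      ((curlE a : ↥(Pvec (k + 1))) : Fin 3 → MvPolynomial (Fin 3) ℝ) = curlLM a.1 :=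
    fun a => rfl
  -- w = curl v + z componentwise
  have hwsum : w = curlLM v.1 + z.1 := by
    have := congrArg (Subtype.val) hwyz
    simpa [hw', hcurlE_coe] using this
  -- z is orthogonal to all curls, hence orthogonal to w
  have hzmem : (z : Fin 3 → MvPolynomial (Fin 3) ℝ) ∈ Pvec k := by
    have hz1 : (z : Fin 3 → MvPolynomial (Fin 3) ℝ) = w - curlLM v.1 := by
      rw [hwsum]; abel
    rw [hz1]
    exact sub_mem hw (curl_mem v.2)
  have hz0 : ipK K w z.1 = 0 := by
    refine h2 z.1 hzmem fun r hr => ?_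
    have hmem : curlE ⟨r, hr⟩ ∈ T := ⟨⟨r, hr⟩, rfl⟩
    have h0 := (Submodule.mem_orthogonal T z).mp hz _ hmem
    rw [hinner, hcurlE_coe] at h0
    rw [ipK_comm]
    exact h0
  -- curls of u and g are orthogonal to w
  have hu0 : ipK K w (curlLM u.1) = 0 := by
    refine h3 u.1 u.2 fun zz hzz => ?_
    have hmem : (⟨zz, hsup_le hzz⟩ : ↥(Pvec (k + 1))) ∈ G' := Submodule.mem_comap.mpr hzz
    have h0 := (Submodule.mem_orthogonal G' u).mp hu _ hmem
    rw [hinner] at h0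
    rw [ipK_comm]
    exact h0
  have hg0 : ipK K w (curlLM g.1) = 0 := by
    obtain ⟨p, hp, qg, hqg, hsum⟩ := Submodule.mem_sup.mp (Submodule.mem_comap.mp hgG)
    obtain ⟨q, hq, rfl⟩ := hqg
    have hsum' : p + gradLM q = (g : Fin 3 → MvPolynomial (Fin 3) ℝ) := hsum
    have : curlLM g.1 = curlLM p := by
      rw [← hsum', map_add, curl_grad, add_zero]
    rw [this]
    exact h1 p hp
  -- conclude
  have hv0 : ipK K w (curlLM v.1) = 0 := by
    have hvsum : (v : Fin 3 → MvPolynomial (Fin 3) ℝ) = g.1 + u.1 := by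
      have := congrArg (Subtype.val) hvgu
      simpa using this
    rw [hvsum, map_add, ipK_add_right hKb, hg0, hu0, add_zero]
  have hww : ipK K w w = 0 := by
    rw [hwsum] at hz0 hv0 ⊢
    rw [ipK_add_right hKb, hv0, hz0, add_zero]
  exact ipK_definite hKo hKne hKb hww
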